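/- arXiv:2003.07357 — 7 statements merged into one kernel-verified Lean document; each statement's English description precedes it below -/
import Mathlib

section
/- Under the time-varying stochastic approximation setting described in the context, and assuming in addition that ‖θ̂_k − θ*_k‖ is integrable for every k, the mean-absolute-deviation satisfies, for every k ∈ ℕ, E‖θ̂_{k+1} − θ*_{k+1}‖ ≤ √(u_k) · E‖θ̂_k − θ*_k‖ + M_k·√(v_k) + B_k. -/
/-!
Write `d = θ̂_k − θ*_k`. Since `g_k(θ*_k) = 0`, strong convexity gives `𝒞‖d‖² ≤ ⟪d, g_k(θ̂_k)⟫`,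
and the Baillon–Haddad cocoercivity of an `ℒ`-Lipschitz convex gradient gives
`‖g_k(θ̂_k)‖² ≤ ℒ⟪d, g_k(θ̂_k)⟫`. Expanding the square, the noiseless step contracts `d` by the
factor `√(1 − a𝒞(2 − aℒ)) ≤ √u_k`. The error `e_k` and the drift of the minimiser enter by the
triangle inequality, with `a_k ≤ √v_k`, and their means are bounded by `M_k` and `B_k` because
`(E X)² ≤ E X²`.
-/

open MeasureTheory Set
open scoped RealInnerProductSpace

section InnerProductSpace

variable {F : Type*} [NormedAddCommGroup F] [InnerProductSpace ℝ F]

theorem le_of_strongly_monotone_of_lipschitz [Nontrivial F] {g : F → F} {C L : ℝ}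
    (hsc : ∀ x y, C * ‖x - y‖ ^ 2 ≤ ⟪x - y, g x - g y⟫)
    (hlip : ∀ x y, ‖g x - g y‖ ≤ L * ‖x - y‖) : C ≤ L := by
  obtain ⟨x, hx⟩ := exists_ne (0 : F)
  have hx' : 0 < ‖x‖ := norm_pos_iff.2 hx
  have h := (hsc x 0).trans ((real_inner_le_norm _ _).trans
    (mul_le_mul_of_nonneg_left (hlip x 0) (norm_nonneg _)))
  rw [sub_zero] at h
  exact le_of_mul_le_mul_right (h.trans_eq (by ring)) (pow_pos hx' 2)

theorem norm_sub_smul_sq_le {d G : F} {a C L : ℝ} (ha : 0 ≤ a) (haL : a * L ≤ 2)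
    (hsc : C * ‖d‖ ^ 2 ≤ ⟪d, G⟫) (hco : ‖G‖ ^ 2 ≤ L * ⟪d, G⟫) :
    ‖d - a • G‖ ^ 2 ≤ (1 - a * C * (2 - a * L)) * ‖d‖ ^ 2 := by
  rw [norm_sub_sq_real, real_inner_smul_right, norm_smul, mul_pow, Real.norm_eq_abs, sq_abs]
  nlinarith [mul_le_mul_of_nonneg_left hco (sq_nonneg a),
    mul_le_mul_of_nonneg_left hsc (mul_nonneg ha (sub_nonneg.2 haL))]

variable [CompleteSpace F] {f : F → ℝ} {g : F → F}

theorem HasGradientAt.hasDerivAt_add_smul {g' x u : F} {t : ℝ}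
    (h : HasGradientAt f g' (x + t • u)) :
    HasDerivAt (fun s : ℝ => f (x + s • u)) ⟪g', u⟫ t := by
  have hline : HasDerivAt (fun s : ℝ => x + s • u) u t := by
    simpa using ((hasDerivAt_id t).smul_const u).const_add x
  simpa [InnerProductSpace.toDual_apply_apply, Function.comp_def] using
    h.hasFDerivAt.comp_hasDerivAt t hline

theorem le_of_hasDerivAt_of_nonneg_on_Ioo {ψ ψ' : ℝ → ℝ} (hψ : ∀ t, HasDerivAt ψ (ψ' t) t)
    (hψ' : ∀ t ∈ Ioo (0 : ℝ) 1, 0 ≤ ψ' t) : ψ 0 ≤ ψ 1 :=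
  monotoneOn_of_hasDerivWithinAt_nonneg (convex_Icc 0 1)
    (fun t _ => (hψ t).continuousAt.continuousWithinAt) (fun t _ => (hψ t).hasDerivWithinAt)
    (by rwa [interior_Icc]) (left_mem_Icc.2 zero_le_one) (right_mem_Icc.2 zero_le_one)
    zero_le_one

theorem add_inner_le_of_monotone_gradient (hg : ∀ z, HasGradientAt f (g z) z)
    (hmono : ∀ z w, 0 ≤ ⟪z - w, g z - g w⟫) (x y : F) :
    f x + ⟪g x, y - x⟫ ≤ f y := by
  have h01 := le_of_hasDerivAt_of_nonneg_on_Ioo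
    (ψ := fun t => f (x + t • (y - x)) - t * ⟪g x, y - x⟫)
    (fun t => ((hg _).hasDerivAt_add_smul).sub (hasDerivAt_mul_const _))
    (fun t ht => by
      have h := hmono (x + t • (y - x)) x
      rw [add_sub_cancel_left, real_inner_smul_left] at h
      rw [← inner_sub_left, real_inner_comm]
      exact (mul_nonneg_iff_of_pos_left ht.1).1 h)
  simp only [zero_smul, add_zero, zero_mul, sub_zero, one_smul, one_mul,
    add_sub_cancel] at h01
  linarith

theorem le_add_inner_add_of_lipschitz_gradient {L : ℝ} (hg : ∀ z, HasGradientAt f (g z) z)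
    (hlip : ∀ z w, ‖g z - g w‖ ≤ L * ‖z - w‖) (x y : F) :
    f y ≤ f x + ⟪g x, y - x⟫ + L / 2 * ‖y - x‖ ^ 2 := by
  set u := y - x
  have hquad : ∀ t : ℝ, HasDerivAt (fun t => t * ⟪g x, u⟫ + L * t ^ 2 / 2 * ‖u‖ ^ 2)
      (⟪g x, u⟫ + L * t * ‖u‖ ^ 2) t := fun t => by
    refine ((hasDerivAt_mul_const _).add
      ((((hasDerivAt_pow 2 t).const_mul L).div_const 2).mul_const (‖u‖ ^ 2))).congr_deriv ?_
    simp only [Nat.cast_ofNat, Nat.add_one_sub_one, pow_one]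
    ring
  have h01 := le_of_hasDerivAt_of_nonneg_on_Ioo
    (fun t => (hquad t).sub (hg _).hasDerivAt_add_smul)
    (fun t ht => by
      have h := hlip (x + t • u) x
      rw [add_sub_cancel_left, norm_smul, Real.norm_of_nonneg ht.1.le] at h
      have hcs := real_inner_le_norm (g (x + t • u) - g x) u
      rw [inner_sub_left] at hcs
      nlinarith [mul_le_mul_of_nonneg_right h (norm_nonneg u)])
  simp only [Pi.sub_apply, zero_smul, add_zero, zero_mul, zero_pow two_ne_zero, mul_zero,
    zero_div, one_smul, one_mul, one_pow] at h01
  rw [show x + u = y from add_sub_cancel x y] at h01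
  linarith

theorem sub_le_inner_sub_of_lipschitz_gradient {L : ℝ} (hL : 0 < L)
    (hg : ∀ z, HasGradientAt f (g z) z) (hmono : ∀ z w, 0 ≤ ⟪z - w, g z - g w⟫)
    (hlip : ∀ z w, ‖g z - g w‖ ≤ L * ‖z - w‖) (x y : F) :
    f x - f y ≤ ⟪g x, x - y⟫ - L⁻¹ / 2 * ‖g x - g y‖ ^ 2 := by
  -- `y + w` is the gradient step of length `1 / L` from `y` for `f - ⟪g x, ·⟫`
  set w := -(L⁻¹ • (g y - g x))
  have hlower := add_inner_le_of_monotone_gradient hg hmono x (y + w)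
  have hupper := le_add_inner_add_of_lipschitz_gradient hg hlip y (y + w)
  rw [add_sub_cancel_left] at hupper
  have hsplit : y + w - x = (y - x) + w := by abel
  rw [hsplit, inner_add_right] at hlower
  have hinner : ⟪g y, w⟫ - ⟪g x, w⟫ = -L⁻¹ * ‖g x - g y‖ ^ 2 := by
    rw [← inner_sub_left, inner_neg_right, real_inner_smul_right, real_inner_self_eq_norm_sq,
      norm_sub_rev]
    ring
  have hnorm : ‖w‖ ^ 2 = L⁻¹ ^ 2 * ‖g x - g y‖ ^ 2 := by
    rw [norm_neg, norm_smul, mul_pow, Real.norm_of_nonneg (inv_nonneg.2 hL.le), norm_sub_rev]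
  have hyx : ⟪g x, y - x⟫ = -⟪g x, x - y⟫ := by rw [← inner_neg_right, neg_sub]
  have hstep : ⟪g y, w⟫ - ⟪g x, w⟫ + L / 2 * ‖w‖ ^ 2 = -(L⁻¹ / 2) * ‖g x - g y‖ ^ 2 := by
    rw [hinner, hnorm]
    field_simp
    ring
  linarith

theorem norm_sub_sq_le_mul_inner_of_lipschitz_gradient {L : ℝ} (hL : 0 < L)
    (hg : ∀ z, HasGradientAt f (g z) z) (hmono : ∀ z w, 0 ≤ ⟪z - w, g z - g w⟫)
    (hlip : ∀ z w, ‖g z - g w‖ ≤ L * ‖z - w‖) (x y : F) :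
    ‖g x - g y‖ ^ 2 ≤ L * ⟪x - y, g x - g y⟫ := by
  have hxy := sub_le_inner_sub_of_lipschitz_gradient hL hg hmono hlip x y
  have hyx := sub_le_inner_sub_of_lipschitz_gradient hL hg hmono hlip y x
  have hsum : ⟪g x, x - y⟫ + ⟪g y, y - x⟫ = ⟪x - y, g x - g y⟫ := by
    simp only [inner_sub_left, inner_sub_right, real_inner_comm x, real_inner_comm y]
    ring
  rw [norm_sub_rev (g y)] at hyx
  have h : L⁻¹ * ‖g x - g y‖ ^ 2 ≤ ⟪x - y, g x - g y⟫ := by linarith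
  rwa [inv_mul_le_iff₀ hL] at h

theorem norm_gradient_step_sub_le {C L a : ℝ} (hg : ∀ z, HasGradientAt f (g z) z)
    (hsc : ∀ x y, C * ‖x - y‖ ^ 2 ≤ ⟪x - y, g x - g y⟫)
    (hlip : ∀ x y, ‖g x - g y‖ ≤ L * ‖x - y‖) (hC : 0 ≤ C) (hL : 0 < L) (ha : 0 ≤ a)
    (haL : a * L ≤ 2) {θ θs : F} (hθs : g θs = 0) :
    ‖θ - a • g θ - θs‖ ≤ √(1 - a * C * (2 - a * L)) * ‖θ - θs‖ := by
  have hmono : ∀ x y, 0 ≤ ⟪x - y, g x - g y⟫ := fun x y =>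
    (mul_nonneg hC (sq_nonneg _)).trans (hsc x y)
  have hco := norm_sub_sq_le_mul_inner_of_lipschitz_gradient hL hg hmono hlip θ θs
  have hsc' := hsc θ θs
  rw [hθs, sub_zero] at hco hsc'
  have h := norm_sub_smul_sq_le ha haL hsc' hco
  rw [show θ - a • g θ - θs = θ - θs - a • g θ by abel]
  rw [← Real.sqrt_sq (norm_nonneg (θ - θs - a • g θ)), ← Real.sqrt_sq (norm_nonneg (θ - θs)),
    ← Real.sqrt_mul' _ (sq_nonneg _)]
  exact Real.sqrt_le_sqrt h

theorem norm_stochastic_gradient_step_sub_le {C L a : ℝ} (hg : ∀ z, HasGradientAt f (g z) z)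
    (hsc : ∀ x y, C * ‖x - y‖ ^ 2 ≤ ⟪x - y, g x - g y⟫)
    (hlip : ∀ x y, ‖g x - g y‖ ≤ L * ‖x - y‖) (hC : 0 ≤ C) (hL : 0 < L) (ha : 0 ≤ a)
    (haL : a * L ≤ 2) {θ θs : F} (hθs : g θs = 0) (e θs' : F) :
    ‖θ - a • (g θ + e) - θs'‖ ≤
      √(1 - a * C * (2 - a * L)) * ‖θ - θs‖ + a * ‖e‖ + ‖θs' - θs‖ := by
  calc ‖θ - a • (g θ + e) - θs'‖ = ‖(θ - a • g θ - θs) - a • e - (θs' - θs)‖ := by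
        rw [smul_add]; congr 1; abel
    _ ≤ ‖θ - a • g θ - θs‖ + ‖a • e‖ + ‖θs' - θs‖ := norm_sub_le_of_le (norm_sub_le _ _) le_rfl
    _ ≤ _ := by
        rw [norm_smul, Real.norm_of_nonneg ha]
        gcongr
        exact norm_gradient_step_sub_le hg hsc hlip hC hL ha haL hθs

end InnerProductSpace

section Expectation

open ProbabilityTheory

variable {Ω : Type*} [MeasurableSpace Ω] {P : Measure Ω}

theorem integral_norm_le_of_integral_norm_sq_le {E : Type*} [NormedAddCommGroup E]
    [IsProbabilityMeasure P] {X : Ω → E} (hX : MemLp X 2 P) {M : ℝ} (hM : 0 ≤ M)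
    (hXM : ∫ ω, ‖X ω‖ ^ 2 ∂P ≤ M ^ 2) : ∫ ω, ‖X ω‖ ∂P ≤ M := by
  have hvar := variance_eq_sub hX.norm ▸ variance_nonneg (fun ω => ‖X ω‖) P
  simp only [Pi.pow_apply] at hvar
  exact le_of_sq_le_sq (by linarith) hM

theorem integral_le_of_ae_le_mul_add_mul_add {X Y Z W : Ω → ℝ} {c a : ℝ}
    (hX : Integrable X P) (hY : Integrable Y P) (hZ : Integrable Z P) (hW : Integrable W P)
    (h : ∀ᵐ ω ∂P, X ω ≤ c * Y ω + a * Z ω + W ω) :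
    ∫ ω, X ω ∂P ≤ c * ∫ ω, Y ω ∂P + a * ∫ ω, Z ω ∂P + ∫ ω, W ω ∂P := by
  have hcY : Integrable (fun ω => c * Y ω) P := hY.const_mul c
  have haZ : Integrable (fun ω => a * Z ω) P := hZ.const_mul a
  have hcYaZ : Integrable (fun ω => c * Y ω + a * Z ω) P := hcY.add haZ
  have hsum : Integrable (fun ω => c * Y ω + a * Z ω + W ω) P := hcYaZ.add hW
  refine (integral_mono_ae hX hsum h).trans_eq ?_
  rw [integral_add hcYaZ hW, integral_add hcY haZ, integral_const_mul, integral_const_mul]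

end Expectation

noncomputable def stepContraction (a q C L : ℝ) : ℝ := L / C + a * C * ((q + 1) * (a * L - 1) - 1)

noncomputable def stepNoiseGain (a q C L : ℝ) : ℝ := a * (a * L * (q + 1) - 1) / (q * C)

section StepParameters

variable {a q C L : ℝ}

theorem one_sub_le_stepContraction (hC : 0 < C) (ha : 0 ≤ a) (hq : 0 ≤ q) (haL : 1 ≤ a * L)
    (hCL : C ≤ L) : 1 - a * C * (2 - a * L) ≤ stepContraction a q C L := by
  have hLC : 1 ≤ L / C := (one_le_div hC).2 hCL
  unfold stepContraction
  nlinarith [mul_nonneg (mul_nonneg (mul_nonneg ha hC.le) hq) (sub_nonneg.2 haL)]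

theorem le_sqrt_stepNoiseGain (hC : 0 < C) (ha : 0 ≤ a) (hq : 0 < q) (haL : 1 ≤ a * L)
    (hCL : C ≤ L) : a ≤ √(stepNoiseGain a q C L) := by
  refine Real.le_sqrt_of_sq_le ?_
  rw [stepNoiseGain, le_div_iff₀ (mul_pos hq hC)]
  nlinarith [mul_le_mul_of_nonneg_left hCL (mul_nonneg (mul_nonneg ha ha) hq.le),
    mul_nonneg ha (sub_nonneg.2 haL)]

end StepParameters

theorem stmt_0_general {p : ℕ} (hp : 1 ≤ p)
    {Ω : Type} [MeasurableSpace Ω] (P : Measure Ω) [IsProbabilityMeasure P]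
    (θhat θstar e : ℕ → Ω → EuclideanSpace ℝ (Fin p))
    (f : ℕ → Ω → EuclideanSpace ℝ (Fin p) → ℝ)
    (g : ℕ → Ω → EuclideanSpace ℝ (Fin p) → EuclideanSpace ℝ (Fin p))
    (a q C L M B u v : ℕ → ℝ)
    (hCpos : ∀ k, 0 < C k) (hM : ∀ k, 0 ≤ M k) (hB : ∀ k, 0 ≤ B k)
    (hreg : ∀ k, ∀ᵐ ω ∂P,
      ContDiff ℝ 1 (f k ω) ∧
      (∀ x, HasGradientAt (f k ω) (g k ω x) x) ∧
      (∀ x y : EuclideanSpace ℝ (Fin p),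
        C k * ‖x - y‖ ^ 2 ≤ (inner ℝ (x - y) (g k ω x - g k ω y) : ℝ)) ∧
      (∀ x y : EuclideanSpace ℝ (Fin p), ‖g k ω x - g k ω y‖ ≤ L k * ‖x - y‖) ∧
      g k ω (θstar k ω) = 0)
    (hrec : ∀ k, ∀ᵐ ω ∂P,
      θhat (k + 1) ω = θhat k ω - a k • (g k ω (θhat k ω) + e k ω))
    (heL2 : ∀ k, MemLp (e k) 2 P)
    (heM : ∀ k, (∫ ω, ‖e k ω‖ ^ 2 ∂P) ≤ M k ^ 2)
    (hdL2 : ∀ k, MemLp (fun ω => θstar (k + 1) ω - θstar k ω) 2 P)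
    (hdB : ∀ k, (∫ ω, ‖θstar (k + 1) ω - θstar k ω‖ ^ 2 ∂P) ≤ B k ^ 2)
    (ha : ∀ k, 0 < a k) (hq : ∀ k, 0 < q k)
    (haL : ∀ k, 1 ≤ a k * L k)
    (haLq : ∀ k, (q k + 1) * (a k * L k - 1) ≤ 1)
    (hu : ∀ k, u k = L k / C k + a k * C k * ((q k + 1) * (a k * L k - 1) - 1))
    (hv : ∀ k, v k = a k * (a k * L k * (q k + 1) - 1) / (q k * C k))
    (hint : ∀ k, Integrable (fun ω => ‖θhat k ω - θstar k ω‖) P) :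
    ∀ k, (∫ ω, ‖θhat (k + 1) ω - θstar (k + 1) ω‖ ∂P) ≤
      Real.sqrt (u k) * (∫ ω, ‖θhat k ω - θstar k ω‖ ∂P) +
        M k * Real.sqrt (v k) + B k := by
  intro k
  have hu' : u k = stepContraction (a k) (q k) (C k) (L k) := hu k
  have hv' : v k = stepNoiseGain (a k) (q k) (C k) (L k) := hv k
  have hL : 0 < L k := pos_of_mul_pos_right (one_pos.trans_le (haL k)) (ha k).le
  have haL2 : a k * L k ≤ 2 := by nlinarith [haL k, haLq k, hq k]
  have hCL : C k ≤ L k := by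
    have : NeZero p := ⟨by omega⟩
    obtain ⟨ω, -, -, hsc, hlip, -⟩ := (hreg k).exists
    exact le_of_strongly_monotone_of_lipschitz hsc hlip
  have hstep : ∀ᵐ ω ∂P, ‖θhat (k + 1) ω - θstar (k + 1) ω‖ ≤ √(u k) * ‖θhat k ω - θstar k ω‖ +
      a k * ‖e k ω‖ + ‖θstar (k + 1) ω - θstar k ω‖ := by
    filter_upwards [hreg k, hrec k] with ω hω hrecω
    obtain ⟨-, hgrad, hsc, hlip, hmin⟩ := hω
    rw [hrecω]
    grw [norm_stochastic_gradient_step_sub_le hgrad hsc hlip (hCpos k).le hL (ha k).le haL2 hmin,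
      hu', one_sub_le_stepContraction (hCpos k) (ha k).le (hq k).le (haL k) hCL]
  have hnoise : a k * ∫ ω, ‖e k ω‖ ∂P ≤ M k * √(v k) := by
    rw [mul_comm (M k), hv']
    exact mul_le_mul (le_sqrt_stepNoiseGain (hCpos k) (ha k).le (hq k) (haL k) hCL)
      (integral_norm_le_of_integral_norm_sq_le (heL2 k) (hM k) (heM k))
      (integral_nonneg fun _ => norm_nonneg _) (Real.sqrt_nonneg _)
  have hdrift := integral_norm_le_of_integral_norm_sq_le (hdL2 k) (hB k) (hdB k)
  have hmean := integral_le_of_ae_le_mul_add_mul_add (hint (k + 1)) (hint k)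
    ((heL2 k).integrable one_le_two).norm ((hdL2 k).integrable one_le_two).norm hstep
  linarith

/-- MAD bound under the bounded-drift time-varying stochastic approximation setting:
for every `k`,
`E‖θ̂_{k+1} − θ*_{k+1}‖ ≤ √(u_k)·E‖θ̂_k − θ*_k‖ + M_k·√(v_k) + B_k`. -/
theorem stmt_0 {p : ℕ} (hp : 1 ≤ p)
    {Ω : Type} [MeasurableSpace Ω] (P : Measure Ω) [IsProbabilityMeasure P]
    (θhat θstar e : ℕ → Ω → EuclideanSpace ℝ (Fin p))
    (f : ℕ → Ω → EuclideanSpace ℝ (Fin p) → ℝ)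
    (g : ℕ → Ω → EuclideanSpace ℝ (Fin p) → EuclideanSpace ℝ (Fin p))
    (a q C L M B u v : ℕ → ℝ)
    (hmeas1 : ∀ k, Measurable (θhat k))
    (hmeas2 : ∀ k, Measurable (θstar k))
    (hmeas3 : ∀ k, Measurable (e k))
    (hCpos : ∀ k, 0 < C k) (hM : ∀ k, 0 ≤ M k) (hB : ∀ k, 0 ≤ B k)
    (hreg : ∀ k, ∀ᵐ ω ∂P,
      ContDiff ℝ 1 (f k ω) ∧
      (∀ x, HasGradientAt (f k ω) (g k ω x) x) ∧
      (∀ x y : EuclideanSpace ℝ (Fin p),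
        C k * ‖x - y‖ ^ 2 ≤ (inner ℝ (x - y) (g k ω x - g k ω y) : ℝ)) ∧
      (∀ x y : EuclideanSpace ℝ (Fin p), ‖g k ω x - g k ω y‖ ≤ L k * ‖x - y‖) ∧
      g k ω (θstar k ω) = 0)
    (hrec : ∀ k, ∀ᵐ ω ∂P,
      θhat (k + 1) ω = θhat k ω - a k • (g k ω (θhat k ω) + e k ω))
    (heL2 : ∀ k, MemLp (e k) 2 P)
    (heM : ∀ k, (∫ ω, ‖e k ω‖ ^ 2 ∂P) ≤ M k ^ 2)
    (hdL2 : ∀ k, MemLp (fun ω => θstar (k + 1) ω - θstar k ω) 2 P)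
    (hdB : ∀ k, (∫ ω, ‖θstar (k + 1) ω - θstar k ω‖ ^ 2 ∂P) ≤ B k ^ 2)
    (ha : ∀ k, 0 < a k) (hq : ∀ k, 0 < q k)
    (haL : ∀ k, 1 ≤ a k * L k)
    (haLq : ∀ k, (q k + 1) * (a k * L k - 1) ≤ 1)
    (hu : ∀ k, u k = L k / C k + a k * C k * ((q k + 1) * (a k * L k - 1) - 1))
    (hv : ∀ k, v k = a k * (a k * L k * (q k + 1) - 1) / (q k * C k))
    (hint : ∀ k, Integrable (fun ω => ‖θhat k ω - θstar k ω‖) P) :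
    ∀ k, (∫ ω, ‖θhat (k + 1) ω - θstar (k + 1) ω‖ ∂P) ≤
      Real.sqrt (u k) * (∫ ω, ‖θhat k ω - θstar k ω‖ ∂P) +
        M k * Real.sqrt (v k) + B k :=
  stmt_0_general hp P θhat θstar e f g a q C L M B u v hCpos hM hB hreg hrec heL2 heM hdL2 hdB ha hq
    haL haLq hu hv hint
end

section
/- Let p ≥ 1. For i = 1, 2, let f_i : ℝ^p → ℝ be continuously differentiable with gradient g_i, 𝒞_i-strongly convex with g_i ℒ_i-Lipschitz, and let θ*_i satisfy g_i(θ*_i) = 0. Fix θ̂ ∈ ℝ^p and e_1, e_2 ∈ ℝ^p, and write Ĝ_i := g_i(θ̂) + e_i. Then ‖θ*_2 − θ*_1‖ ≤ (1/𝒞_2)(‖Ĝ_2‖ + ‖e_2‖) + (1/𝒞_1)(‖Ĝ_1‖ + ‖e_1‖), and ‖θ*_2 − θ*_1‖ ≥ max{ (1/ℒ_2)·|‖Ĝ_2‖ − ‖e_2‖| − (1/𝒞_1)(‖Ĝ_1‖ + ‖e_1‖), (1/ℒ_1)·|‖Ĝ_1‖ − ‖e_1‖| − (1/𝒞_2)(‖Ĝ_2‖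 + ‖e_2‖) }. -/
/-!
Only the point `θ̂` links the two losses. Strong monotonicity of `gᵢ` and `gᵢ θ*ᵢ = 0` give
`𝒞ᵢ ‖θ̂ - θ*ᵢ‖ ≤ ‖gᵢ θ̂‖`, and the Lipschitz bound gives `‖gᵢ θ̂‖ ≤ ℒᵢ ‖θ̂ - θ*ᵢ‖`; the noise
enters through `|‖Ĝᵢ‖ - ‖eᵢ‖| ≤ ‖gᵢ θ̂‖ ≤ ‖Ĝᵢ‖ + ‖eᵢ‖`. Both drift bounds then follow from the
triangle inequality through `θ̂`.
-/

open RealInnerProductSpace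

/-- No sign condition on `L`: if `L ≤ 0` the hypotheses force `a = 0`, and `0 / L = 0`. -/
theorem div_le_of_nonneg_of_le_mul {a d L : ℝ} (ha : 0 ≤ a) (hd : 0 ≤ d) (h : a ≤ L * d) :
    a / L ≤ d := by
  rcases le_or_gt L 0 with hL | hL
  · have : a = 0 := le_antisymm (h.trans (mul_nonpos_of_nonpos_of_nonneg hL hd)) ha
    simp [this, hd]
  · rwa [div_le_iff₀ hL, mul_comm]

section RootDistance

variable {E F : Type*}

theorem mul_norm_sub_le_norm_of_strongMono [NormedAddCommGroup E] [InnerProductSpace ℝ E]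
    {g : E → E} {C : ℝ} (hsc : ∀ x y, C * ‖x - y‖ ^ 2 ≤ ⟪x - y, g x - g y⟫)
    {x₀ : E} (hroot : g x₀ = 0) (x : E) :
    C * ‖x - x₀‖ ≤ ‖g x‖ := by
  have hmono : C * ‖x - x₀‖ ^ 2 ≤ ‖x - x₀‖ * ‖g x‖ := by
    have h := hsc x x₀
    rw [hroot, sub_zero] at h
    exact h.trans (real_inner_le_norm (x - x₀) (g x))
  rcases (norm_nonneg (x - x₀)).eq_or_lt with h0 | hpos
  · simp [← h0]
  · nlinarith

theorem norm_sub_root_le_of_strongMono [NormedAddCommGroup E] [InnerProductSpace ℝ E]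
    {g : E → E} {C : ℝ} (hC : 0 < C) (hsc : ∀ x y, C * ‖x - y‖ ^ 2 ≤ ⟪x - y, g x - g y⟫)
    {x₀ : E} (hroot : g x₀ = 0) (x e : E) :
    ‖x - x₀‖ ≤ (‖g x + e‖ + ‖e‖) / C := by
  rw [le_div_iff₀' hC]
  exact (mul_norm_sub_le_norm_of_strongMono hsc hroot x).trans (norm_le_add_norm_add _ _)

theorem le_norm_sub_root_of_lipschitz [SeminormedAddCommGroup E] [SeminormedAddCommGroup F]
    {g : E → F} {L : ℝ} (hlip : ∀ x y, ‖g x - g y‖ ≤ L * ‖x - y‖)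
    {x₀ : E} (hroot : g x₀ = 0) (x : E) (e : F) :
    |‖g x + e‖ - ‖e‖| / L ≤ ‖x - x₀‖ := by
  refine div_le_of_nonneg_of_le_mul (abs_nonneg _) (norm_nonneg _) ?_
  calc |‖g x + e‖ - ‖e‖| ≤ ‖g x‖ := by simpa using abs_norm_sub_norm_le (g x + e) e
    _ ≤ L * ‖x - x₀‖ := by simpa [hroot] using hlip x x₀

end RootDistance

theorem stmt_5_general {p : ℕ}
    (g1 g2 : EuclideanSpace ℝ (Fin p) → EuclideanSpace ℝ (Fin p))
    (C1 C2 L1 L2 : ℝ) (hC1 : 0 < C1) (hC2 : 0 < C2)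
    (hsc1 : ∀ x y : EuclideanSpace ℝ (Fin p),
      C1 * ‖x - y‖ ^ 2 ≤ (inner ℝ (x - y) (g1 x - g1 y) : ℝ))
    (hsc2 : ∀ x y : EuclideanSpace ℝ (Fin p),
      C2 * ‖x - y‖ ^ 2 ≤ (inner ℝ (x - y) (g2 x - g2 y) : ℝ))
    (hlip1 : ∀ x y : EuclideanSpace ℝ (Fin p), ‖g1 x - g1 y‖ ≤ L1 * ‖x - y‖)
    (hlip2 : ∀ x y : EuclideanSpace ℝ (Fin p), ‖g2 x - g2 y‖ ≤ L2 * ‖x - y‖)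
    (θstar1 θstar2 : EuclideanSpace ℝ (Fin p))
    (hroot1 : g1 θstar1 = 0) (hroot2 : g2 θstar2 = 0)
    (θhat e1 e2 : EuclideanSpace ℝ (Fin p)) :
    ‖θstar2 - θstar1‖ ≤
        1 / C2 * (‖g2 θhat + e2‖ + ‖e2‖) + 1 / C1 * (‖g1 θhat + e1‖ + ‖e1‖) ∧
      max (1 / L2 * |‖g2 θhat + e2‖ - ‖e2‖| - 1 / C1 * (‖g1 θhat + e1‖ + ‖e1‖))
          (1 / L1 * |‖g1 θhat + e1‖ - ‖e1‖| - 1 / C2 * (‖g2 θhat + e2‖ + ‖e2‖)) ≤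
        ‖θstar2 - θstar1‖ := by
  simp only [one_div_mul_eq_div]
  have hupper1 := norm_sub_root_le_of_strongMono hC1 hsc1 hroot1 θhat e1
  have hupper2 := norm_sub_root_le_of_strongMono hC2 hsc2 hroot2 θhat e2
  have hlower1 := le_norm_sub_root_of_lipschitz hlip1 hroot1 θhat e1
  have hlower2 := le_norm_sub_root_of_lipschitz hlip2 hroot2 θhat e2
  have htri := norm_sub_le_norm_sub_add_norm_sub θstar2 θhat θstar1
  have htri1 := norm_sub_le_norm_sub_add_norm_sub θhat θstar1 θstar2
  have htri2 := norm_sub_le_norm_sub_add_norm_sub θhat θstar2 θstar1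
  rw [norm_sub_rev θstar2 θhat] at htri
  rw [norm_sub_rev θstar1 θstar2] at htri1
  exact ⟨by linarith, max_le (by linarith) (by linarith)⟩

/-- Drift bounds from two noisy gradient observations at a common point `θ̂`:
with `Ĝᵢ = gᵢ θ̂ + eᵢ` for two strongly convex losses with Lipschitz gradients
and roots `θ*ᵢ`,
`‖θ*₂ − θ*₁‖ ≤ (1/𝒞₂)(‖Ĝ₂‖+‖e₂‖) + (1/𝒞₁)(‖Ĝ₁‖+‖e₁‖)` and
`‖θ*₂ − θ*₁‖ ≥ max{(1/ℒ₂)|‖Ĝ₂‖−‖e₂‖| − (1/𝒞₁)(‖Ĝ₁‖+‖e₁‖),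
(1/ℒ₁)|‖Ĝ₁‖−‖e₁‖| − (1/𝒞₂)(‖Ĝ₂‖+‖e₂‖)}`. -/
theorem stmt_5 {p : ℕ} (hp : 1 ≤ p)
    (f1 f2 : EuclideanSpace ℝ (Fin p) → ℝ)
    (g1 g2 : EuclideanSpace ℝ (Fin p) → EuclideanSpace ℝ (Fin p))
    (C1 C2 L1 L2 : ℝ) (hC1 : 0 < C1) (hC2 : 0 < C2)
    (hsmooth1 : ContDiff ℝ 1 f1) (hsmooth2 : ContDiff ℝ 1 f2)
    (hgrad1 : ∀ x, HasGradientAt f1 (g1 x) x)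
    (hgrad2 : ∀ x, HasGradientAt f2 (g2 x) x)
    (hsc1 : ∀ x y : EuclideanSpace ℝ (Fin p),
      C1 * ‖x - y‖ ^ 2 ≤ (inner ℝ (x - y) (g1 x - g1 y) : ℝ))
    (hsc2 : ∀ x y : EuclideanSpace ℝ (Fin p),
      C2 * ‖x - y‖ ^ 2 ≤ (inner ℝ (x - y) (g2 x - g2 y) : ℝ))
    (hlip1 : ∀ x y : EuclideanSpace ℝ (Fin p), ‖g1 x - g1 y‖ ≤ L1 * ‖x - y‖)
    (hlip2 : ∀ x y : EuclideanSpace ℝ (Fin p), ‖g2 x - g2 y‖ ≤ L2 * ‖x - y‖)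
    (θstar1 θstar2 : EuclideanSpace ℝ (Fin p))
    (hroot1 : g1 θstar1 = 0) (hroot2 : g2 θstar2 = 0)
    (θhat e1 e2 : EuclideanSpace ℝ (Fin p)) :
    ‖θstar2 - θstar1‖ ≤
        1 / C2 * (‖g2 θhat + e2‖ + ‖e2‖) + 1 / C1 * (‖g1 θhat + e1‖ + ‖e1‖) ∧
      max (1 / L2 * |‖g2 θhat + e2‖ - ‖e2‖| - 1 / C1 * (‖g1 θhat + e1‖ + ‖e1‖))
          (1 / L1 * |‖g1 θhat + e1‖ - ‖e1‖| - 1 / C2 * (‖g2 θhat + e2‖ + ‖e2‖)) ≤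
        ‖θstar2 - θstar1‖ :=
  stmt_5_general g1 g2 C1 C2 L1 L2 hC1 hC2 hsc1 hsc2 hlip1 hlip2 θstar1 θstar2 hroot1 hroot2 θhat e1
    e2
end

section
/- Let p ≥ 1, let H be a symmetric real p×p matrix, V a real p×p matrix, a ∈ ℝ, and θ_0 ∈ ℝ^p. On a probability space, let (ξ_j)_{j∈ℕ} be mutually independent random vectors in ℝ^p whose components are square-integrable, each with mean zero (E ξ_j = 0) and common covariance E[ξ_j(s)·ξ_j(t)] = V_{st} for all coordinates s, t. Define θ̂_0 = θ_0 and θ̂_{j+1} = (I − aH)θ̂_j − a·ξ_j, and set Ĝ_j := H θ̂_j + ξ_j. Then for every k ≥ 1, E⟨Ĝ_k, Ĝ_{k−1}⟩ = θ_0ᵀ(I − aH)^k H² (I − aH)^{k−1} θ_0 − a·tr(H V) + a²·∑_{i=0}^{k−2} tr((I − aH)^{2i+1} H² V), where the sum is empty when k = 1. -/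
/-!
Unrolling the recursion gives `Ĝ_j = H(I - aH)^j θ₀ + ∑_{i ≤ j} A_{j,i} ξ_i` with deterministic
gains `A_{j,j} = I` and `A_{j,i} = -aH(I - aH)^{j-1-i}` for `i < j`. For independent centred noise
with covariance `V`, `E⟨x + ∑ A_i ξ_i, y + ∑ C_i ξ_i⟩ = ⟨x, y⟩ + ∑_i tr(A_iᵀ C_i V)`, all cross
terms vanishing. For the pair `Ĝ_k, Ĝ_{k-1}` the index `i = k - 1` contributes `-a tr(HV)`, and
since `H` is symmetric and commutes with `I - aH`, each `i < k - 1` contributes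
`a² tr((I - aH)^{2(k-2-i)+1} H² V)`.
-/

open Matrix MeasureTheory ProbabilityTheory Finset

theorem eq_pow_mulVec_add_sum_of_succ_eq {n R : Type*} [Fintype n] [DecidableEq n] [Semiring R]
    (B : Matrix n n R) {x u : ℕ → n → R}
    (h : ∀ j, x (j + 1) = B *ᵥ x j + u j) (j : ℕ) :
    x j = B ^ j *ᵥ x 0 + ∑ i ∈ range j, B ^ (j - 1 - i) *ᵥ u i := by
  induction j with
  | zero => simp
  | succ j ih =>
    rw [h, ih, mulVec_add, mulVec_mulVec, ← pow_succ', mulVec_sum, sum_range_succ, add_assoc,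
      Nat.add_sub_cancel, Nat.sub_self, pow_zero, one_mulVec]
    congr 2
    refine sum_congr rfl fun i hi => ?_
    rw [mulVec_mulVec, ← pow_succ', Nat.sub_right_comm j 1 i,
      Nat.sub_add_cancel (by simp at hi; omega)]

theorem dotProduct_mulVec_mulVec {m n R : Type*} [Fintype m] [Fintype n] [CommSemiring R]
    (A C : Matrix m n R) (x y : n → R) :
    (A *ᵥ x) ⬝ᵥ (C *ᵥ y) = x ⬝ᵥ (Aᵀ * C) *ᵥ y := by
  rw [dotProduct_mulVec, dotProduct_mulVec, ← vecMul_vecMul, vecMul_transpose]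

section Noise

variable {ι m n Ω : Type*} [Fintype n] [MeasurableSpace Ω] {P : Measure Ω}

theorem memLp_mulVec_apply {X : Ω → n → ℝ} (hX : ∀ s, MemLp (fun ω => X ω s) 2 P)
    (A : Matrix m n ℝ) (s : m) : MemLp (fun ω => (A *ᵥ X ω) s) 2 P :=
  memLp_finsetSum _ fun t _ => (hX t).const_mul _

theorem integrable_dotProduct_of_memLp {X Y : Ω → n → ℝ}
    (hX : ∀ s, MemLp (fun ω => X ω s) 2 P) (hY : ∀ s, MemLp (fun ω => Y ω s) 2 P) :
    Integrable (fun ω => X ω ⬝ᵥ Y ω) P :=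
  integrable_finsetSum _ fun s _ => (hX s).integrable_mul (hY s)

variable {ξ : ι → Ω → n → ℝ}

theorem integral_dotProduct_eq_zero (hint : ∀ i s, Integrable (fun ω => ξ i ω s) P)
    (hmean : ∀ i s, ∫ ω, ξ i ω s ∂P = 0) (c : n → ℝ) (i : ι) :
    ∫ ω, c ⬝ᵥ ξ i ω ∂P = 0 := by
  simp only [dotProduct]
  rw [integral_finsetSum _ fun s _ => (hint i s).const_mul _]
  simp [integral_const_mul, hmean]

theorem integral_dotProduct_sum_mulVec_eq_zero [Fintype m]
    (hint : ∀ i s, Integrable (fun ω => ξ i ω s) P) (hmean : ∀ i s, ∫ ω, ξ i ω s ∂P = 0)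
    (c : m → ℝ) (t : Finset ι) (C : ι → Matrix m n ℝ) :
    ∫ ω, c ⬝ᵥ ∑ j ∈ t, C j *ᵥ ξ j ω ∂P = 0 := by
  simp only [dotProduct_sum, dotProduct_mulVec]
  rw [integral_finsetSum]
  · exact sum_eq_zero fun j _ => integral_dotProduct_eq_zero hint hmean _ j
  · exact fun j _ => integrable_finsetSum _ fun s _ => (hint j s).const_mul _

variable [DecidableEq ι] {V : Matrix n n ℝ}
  (hindep : iIndepFun ξ P) (hL2 : ∀ i s, MemLp (fun ω => ξ i ω s) 2 P)
  (hmean : ∀ i s, ∫ ω, ξ i ω s ∂P = 0) (hcov : ∀ i s t, ∫ ω, ξ i ω s * ξ i ω t ∂P = V s t)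
include hindep hL2 hmean hcov

theorem integral_dotProduct_mulVec_of_iIndepFun (M : Matrix n n ℝ) (i j : ι) :
    ∫ ω, ξ i ω ⬝ᵥ M *ᵥ ξ j ω ∂P = if i = j then (M * V).trace else 0 := by
  have hexpand : ∀ ω, ξ i ω ⬝ᵥ M *ᵥ ξ j ω = ∑ s, ∑ t, M s t * (ξ i ω s * ξ j ω t) := by
    intro ω
    simp only [dotProduct, mulVec, mul_sum]
    exact sum_congr rfl fun s _ => sum_congr rfl fun t _ => by ring
  have hint : ∀ s t, Integrable (fun ω => ξ i ω s * ξ j ω t) P := fun s t =>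
    (hL2 i s).integrable_mul (hL2 j t)
  have hsum : ∫ ω, ξ i ω ⬝ᵥ M *ᵥ ξ j ω ∂P = ∑ s, ∑ t, M s t * ∫ ω, ξ i ω s * ξ j ω t ∂P := by
    simp only [hexpand]
    rw [integral_finsetSum]
    · refine sum_congr rfl fun s _ => ?_
      rw [integral_finsetSum _ fun t _ => (hint s t).const_mul _]
      simp only [integral_const_mul]
    · exact fun s _ => integrable_finsetSum _ fun t _ => (hint s t).const_mul _
  rw [hsum]
  split_ifs with hij
  · subst hij
    simp only [trace, diag_apply, mul_apply]
    exact sum_congr rfl fun s _ => sum_congr rfl fun t _ => by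
      rw [← hcov i t s]
      simp only [mul_comm]
  · have hindep_coord : ∀ s t, IndepFun (fun ω => ξ i ω s) (fun ω => ξ j ω t) P := fun s t =>
      (hindep.indepFun hij).comp (measurable_pi_apply s) (measurable_pi_apply t)
    refine sum_eq_zero fun s _ => sum_eq_zero fun t _ => ?_
    rw [← Pi.mul_def, (hindep_coord s t).integral_mul_eq_mul_integral (hL2 i s).1 (hL2 j t).1,
      hmean, zero_mul, mul_zero]

theorem integral_sum_mulVec_dotProduct_sum_mulVec [Fintype m] (s t : Finset ι)
    (A C : ι → Matrix m n ℝ) :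
    ∫ ω, (∑ i ∈ s, A i *ᵥ ξ i ω) ⬝ᵥ (∑ j ∈ t, C j *ᵥ ξ j ω) ∂P =
      ∑ i ∈ s ∩ t, ((A i)ᵀ * C i * V).trace := by
  have hint : ∀ i j (M : Matrix n n ℝ), Integrable (fun ω => ξ i ω ⬝ᵥ M *ᵥ ξ j ω) P :=
    fun i j M => integrable_dotProduct_of_memLp (hL2 i) (memLp_mulVec_apply (hL2 j) M)
  have hexpand : ∀ ω, (∑ i ∈ s, A i *ᵥ ξ i ω) ⬝ᵥ (∑ j ∈ t, C j *ᵥ ξ j ω) =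
      ∑ i ∈ s, ∑ j ∈ t, ξ i ω ⬝ᵥ ((A i)ᵀ * C j) *ᵥ ξ j ω := fun ω => by
    rw [sum_dotProduct]
    simp only [dotProduct_sum, dotProduct_mulVec_mulVec]
  simp only [hexpand]
  rw [integral_finsetSum _ fun i _ => integrable_finsetSum _ fun j _ => hint i j _,
    ← sum_ite_mem]
  refine sum_congr rfl fun i _ => ?_
  rw [integral_finsetSum _ fun j _ => hint i j _]
  simp only [integral_dotProduct_mulVec_of_iIndepFun hindep hL2 hmean hcov, sum_ite_eq]

theorem integral_add_sum_mulVec_dotProduct_add_sum_mulVec [Fintype m] [IsProbabilityMeasure P]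
    (x y : m → ℝ) (s t : Finset ι) (A C : ι → Matrix m n ℝ) :
    ∫ ω, (x + ∑ i ∈ s, A i *ᵥ ξ i ω) ⬝ᵥ (y + ∑ j ∈ t, C j *ᵥ ξ j ω) ∂P =
      x ⬝ᵥ y + ∑ i ∈ s ∩ t, ((A i)ᵀ * C i * V).trace := by
  have hint : ∀ i s, Integrable (fun ω => ξ i ω s) P := fun i s =>
    (hL2 i s).integrable one_le_two
  have hsum : ∀ (t : Finset ι) (C : ι → Matrix m n ℝ) s,
      MemLp (fun ω => (∑ j ∈ t, C j *ᵥ ξ j ω) s) 2 P := fun t C s => by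
    simp only [Finset.sum_apply]
    exact memLp_finsetSum _ fun j _ => memLp_mulVec_apply (hL2 j) _ s
  have hlin : ∀ (z : m → ℝ) (t : Finset ι) (C : ι → Matrix m n ℝ),
      Integrable (fun ω => z ⬝ᵥ ∑ j ∈ t, C j *ᵥ ξ j ω) P := fun z t C =>
    integrable_dotProduct_of_memLp (fun _ => memLp_const _) (hsum t C)
  have hexpand : ∀ ω, (x + ∑ i ∈ s, A i *ᵥ ξ i ω) ⬝ᵥ (y + ∑ j ∈ t, C j *ᵥ ξ j ω) =
      x ⬝ᵥ y + (x ⬝ᵥ ∑ j ∈ t, C j *ᵥ ξ j ω + (y ⬝ᵥ ∑ i ∈ s, A i *ᵥ ξ i ω +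
        (∑ i ∈ s, A i *ᵥ ξ i ω) ⬝ᵥ (∑ j ∈ t, C j *ᵥ ξ j ω))) := fun ω => by
    simp only [add_dotProduct, dotProduct_add, dotProduct_comm _ y]
    abel
  have hquad := integrable_dotProduct_of_memLp (hsum s A) (hsum t C)
  simp only [hexpand]
  rw [integral_add (integrable_const _) ?_, integral_add (hlin _ _ _) ?_,
    integral_add (hlin _ _ _) hquad, integral_dotProduct_sum_mulVec_eq_zero hint hmean,
    integral_dotProduct_sum_mulVec_eq_zero hint hmean,
    integral_sum_mulVec_dotProduct_sum_mulVec hindep hL2 hmean hcov, integral_const]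
  · simp
  · exact (hlin _ _ _).add hquad
  · exact (hlin _ _ _).add ((hlin _ _ _).add hquad)

end Noise

section SGD

variable {n R : Type*} [Fintype n] [DecidableEq n] [CommRing R] {a : R} {H : Matrix n n R}

/-- The matrix multiplying `ξ i` in `Ĝ j`, for `i ≤ j` (for `i > j` the truncated subtraction
gives a junk value). -/
def sgdGradNoiseGain (a : R) (H : Matrix n n R) (j i : ℕ) : Matrix n n R :=
  if i = j then 1 else -a • (H * (1 - a • H) ^ (j - 1 - i))

theorem mulVec_add_eq_sum_sgdGradNoiseGain_mulVec {θ ξ : ℕ → n → R}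
    (hrec : ∀ j, θ (j + 1) = (1 - a • H) *ᵥ θ j - a • ξ j) (j : ℕ) :
    H *ᵥ θ j + ξ j =
      (H * (1 - a • H) ^ j) *ᵥ θ 0 + ∑ i ∈ range (j + 1), sgdGradNoiseGain a H j i *ᵥ ξ i := by
  have hθ := eq_pow_mulVec_add_sum_of_succ_eq (1 - a • H) (x := θ) (u := fun i => -(a • ξ i))
    (fun j => by rw [hrec, sub_eq_add_neg]) j
  rw [hθ, mulVec_add, mulVec_mulVec, mulVec_sum, sum_range_succ, sgdGradNoiseGain, if_pos rfl,
    one_mulVec, add_assoc]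
  refine congrArg (_ + ·) (congrArg (· + ξ j) (sum_congr rfl fun i hi => ?_))
  rw [sgdGradNoiseGain, if_neg (mem_range.mp hi).ne, mulVec_mulVec, mulVec_neg, neg_smul,
    neg_mulVec, mulVec_smul, smul_mulVec]

theorem transpose_mul_pow_mul_mul_pow {B : Matrix n n R} (hH : H.IsSymm) (hB : B.IsSymm)
    (i j : ℕ) : (H * B ^ i)ᵀ * (H * B ^ j) = B ^ i * H ^ 2 * B ^ j := by
  rw [transpose_mul, transpose_pow, hH.eq, hB.eq, sq]
  simp only [mul_assoc]

theorem sum_trace_sgdGradNoiseGain (hH : H.IsSymm) (V : Matrix n n R) (k : ℕ) :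
    ∑ i ∈ range (k + 1),
        ((sgdGradNoiseGain a H (k + 1) i)ᵀ * sgdGradNoiseGain a H k i * V).trace =
      -(a * (H * V).trace) +
        a ^ 2 * ∑ i ∈ range k, ((1 - a • H) ^ (2 * i + 1) * H ^ 2 * V).trace := by
  set B := 1 - a • H
  have hcomm : Commute H B := (Commute.one_right H).sub_right ((Commute.refl H).smul_right a)
  have hterm : ∀ i ∈ range k,
      ((sgdGradNoiseGain a H (k + 1) i)ᵀ * sgdGradNoiseGain a H k i * V).trace =
        a ^ 2 * (B ^ (2 * (k - 1 - i) + 1) * H ^ 2 * V).trace := by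
    intro i hi
    have hik := mem_range.mp hi
    have hpow : B ^ (k - i) * H ^ 2 * B ^ (k - 1 - i) = B ^ (2 * (k - 1 - i) + 1) * H ^ 2 := by
      rw [mul_assoc, ((hcomm.pow_right _).pow_left 2).eq, ← mul_assoc, ← pow_add]
      congr 2
      omega
    rw [sgdGradNoiseGain, sgdGradNoiseGain, if_neg (by omega), if_neg hik.ne, Nat.add_sub_cancel,
      transpose_smul, smul_mul_smul_comm, smul_mul, trace_smul,
      transpose_mul_pow_mul_mul_pow hH (isSymm_one.sub (hH.smul a)), hpow, smul_eq_mul]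
    ring
  rw [sum_range_succ, sum_congr rfl hterm,
    sum_range_reflect (fun i => a ^ 2 * (B ^ (2 * i + 1) * H ^ 2 * V).trace), ← mul_sum,
    sgdGradNoiseGain, sgdGradNoiseGain, if_neg (by omega), if_pos rfl, Nat.add_sub_cancel,
    Nat.sub_self, pow_zero, mul_one, mul_one, transpose_smul, hH.eq, smul_mul, trace_smul,
    smul_eq_mul]
  ring

end SGD

theorem stmt_7_general {p : ℕ}
    {Ω : Type} [MeasurableSpace Ω] (P : Measure Ω) [IsProbabilityMeasure P]
    (H V : Matrix (Fin p) (Fin p) ℝ) (hH : H.IsSymm)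
    (a : ℝ) (θ0 : Fin p → ℝ)
    (ξ : ℕ → Ω → Fin p → ℝ)
    (hindep : iIndepFun ξ P)
    (hL2 : ∀ j s, MemLp (fun ω => ξ j ω s) 2 P)
    (hmean : ∀ j s, (∫ ω, ξ j ω s ∂P) = 0)
    (hcov : ∀ j s t, (∫ ω, ξ j ω s * ξ j ω t ∂P) = V s t)
    (θhat : ℕ → Ω → Fin p → ℝ)
    (hθ0 : ∀ ω, θhat 0 ω = θ0)
    (hrec : ∀ j ω, θhat (j + 1) ω = (1 - a • H) *ᵥ θhat j ω - a • ξ j ω)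
    (G : ℕ → Ω → Fin p → ℝ)
    (hG : ∀ j ω, G j ω = H *ᵥ θhat j ω + ξ j ω) :
    ∀ k : ℕ, 1 ≤ k →
      (∫ ω, G k ω ⬝ᵥ G (k - 1) ω ∂P) =
        θ0 ⬝ᵥ ((1 - a • H) ^ k * H ^ 2 * (1 - a • H) ^ (k - 1)) *ᵥ θ0 -
            a * (H * V).trace +
          a ^ 2 * ∑ i ∈ Finset.range (k - 1),
            ((1 - a • H) ^ (2 * i + 1) * H ^ 2 * V).trace := by
  intro k hk
  obtain ⟨k, rfl⟩ := Nat.exists_eq_add_of_le' hk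
  have hG_eq : ∀ j ω, G j ω = (H * (1 - a • H) ^ j) *ᵥ θ0 +
      ∑ i ∈ range (j + 1), sgdGradNoiseGain a H j i *ᵥ ξ i ω := fun j ω => by
    rw [hG, ← hθ0 ω]
    exact mulVec_add_eq_sum_sgdGradNoiseGain_mulVec (θ := (θhat · ω)) (fun j => hrec j ω) j
  simp only [hG_eq, add_tsub_cancel_right]
  rw [integral_add_sum_mulVec_dotProduct_add_sum_mulVec hindep hL2 hmean hcov, range_inter_range,
    min_eq_right (by omega), sum_trace_sgdGradNoiseGain hH, dotProduct_mulVec_mulVec,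
    transpose_mul_pow_mul_mul_pow hH (isSymm_one.sub (hH.smul a))]
  ring

/-- Expected inner product of successive noisy gradients for constant-gain SGD on a
quadratic loss: with `θ̂_{j+1} = (I−aH)θ̂_j − aξ_j`, `Ĝ_j = Hθ̂_j + ξ_j`, and
independent mean-zero noise of covariance `V`, for `k ≥ 1`,
`E⟨Ĝ_k, Ĝ_{k−1}⟩ = θ₀ᵀ(I−aH)^k H² (I−aH)^{k−1} θ₀ − a·tr(HV)
+ a²∑_{i=0}^{k−2} tr((I−aH)^{2i+1}H²V)`. -/
theorem stmt_7 {p : ℕ} (hp : 1 ≤ p)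
    {Ω : Type} [MeasurableSpace Ω] (P : Measure Ω) [IsProbabilityMeasure P]
    (H V : Matrix (Fin p) (Fin p) ℝ) (hH : H.IsSymm)
    (a : ℝ) (θ0 : Fin p → ℝ)
    (ξ : ℕ → Ω → Fin p → ℝ)
    (hmeas : ∀ j, Measurable (ξ j))
    (hindep : iIndepFun ξ P)
    (hL2 : ∀ j s, MemLp (fun ω => ξ j ω s) 2 P)
    (hmean : ∀ j s, (∫ ω, ξ j ω s ∂P) = 0)
    (hcov : ∀ j s t, (∫ ω, ξ j ω s * ξ j ω t ∂P) = V s t)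
    (θhat : ℕ → Ω → Fin p → ℝ)
    (hθ0 : ∀ ω, θhat 0 ω = θ0)
    (hrec : ∀ j ω, θhat (j + 1) ω = (1 - a • H) *ᵥ θhat j ω - a • ξ j ω)
    (G : ℕ → Ω → Fin p → ℝ)
    (hG : ∀ j ω, G j ω = H *ᵥ θhat j ω + ξ j ω) :
    ∀ k : ℕ, 1 ≤ k →
      (∫ ω, G k ω ⬝ᵥ G (k - 1) ω ∂P) =
        θ0 ⬝ᵥ ((1 - a • H) ^ k * H ^ 2 * (1 - a • H) ^ (k - 1)) *ᵥ θ0 -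
            a * (H * V).trace +
          a ^ 2 * ∑ i ∈ Finset.range (k - 1),
            ((1 - a • H) ^ (2 * i + 1) * H ^ 2 * V).trace :=
  stmt_7_general P H V hH a θ0 ξ hindep hL2 hmean hcov θhat hθ0 hrec G hG
end

section
/- Let p ≥ 1. Let P be a p×p permutation matrix, Q a p×p orthogonal matrix, L a real p×p invertible matrix with ‖Lᵀx‖ ≤ σ̄‖x‖ for all x ∈ ℝ^p (σ̄ > 0), and Λ = diag(λ_1, …, λ_p). Set H̄ := Pᵀ L Q Λ Qᵀ Lᵀ P. Suppose λ* > 0 satisfies xᵀ H̄ x ≥ (λ*/2)‖x‖² for all x, and let τ be a real with 0 < τ ≤ λ*/(2σ̄²). Then λ_j ≥ τ for every j = 1, …, p; consequently the eigenvalue-modified diagonal matrix with entries max{τ, |λ_j|} equals Λ, i.e., the preconditioning step leaves H̄ unchanged. -/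
/-!
Write `H̄ = Cᵀ Λ C` with `C = Qᵀ Lᵀ P`, which is invertible. For each `j` take `x` with
`C x = eⱼ`. Then `xᵀ H̄ x = λⱼ`, while `1 = ‖eⱼ‖ = ‖Lᵀ (P x)‖ ≤ σ̄ ‖P x‖ = σ̄ ‖x‖` because `Qᵀ` and `P`
are orthogonal. Hence `λⱼ ≥ (λ*/2) ‖x‖² ≥ λ*/(2σ̄²) ≥ τ > 0`, so `max τ |λⱼ| = λⱼ`.
-/

open Matrix

noncomputable def euclNorm {p : ℕ} (x : Fin p → ℝ) : ℝ := Real.sqrt (∑ i, x i ^ 2)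

def IsPermutationMatrix {p : ℕ} (M : Matrix (Fin p) (Fin p) ℝ) : Prop :=
  ∃ σ : Equiv.Perm (Fin p), ∀ i j, M i j = if i = σ j then 1 else 0

lemma euclNorm_eq_sqrt_dotProduct {p : ℕ} (x : Fin p → ℝ) : euclNorm x = √(x ⬝ᵥ x) := by
  simp only [euclNorm, dotProduct, sq]

lemma euclNorm_single_one {p : ℕ} (j : Fin p) : euclNorm (Pi.single j (1 : ℝ)) = 1 := by
  simp [euclNorm, Pi.single_apply]

lemma euclNorm_mulVec_of_transpose_mul_self {p : ℕ} {A : Matrix (Fin p) (Fin p) ℝ}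
    (hA : Aᵀ * A = 1) (x : Fin p → ℝ) : euclNorm (A *ᵥ x) = euclNorm x := by
  rw [euclNorm_eq_sqrt_dotProduct, euclNorm_eq_sqrt_dotProduct, dotProduct_mulVec,
    ← mulVec_transpose, mulVec_mulVec, hA, one_mulVec]

lemma IsPermutationMatrix.exists_eq_permMatrix {p : ℕ} {M : Matrix (Fin p) (Fin p) ℝ}
    (hM : IsPermutationMatrix M) : ∃ σ : Equiv.Perm (Fin p), M = σ.permMatrix ℝ := by
  obtain ⟨σ, hσ⟩ := hM
  refine ⟨σ⁻¹, Matrix.ext fun i j => ?_⟩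
  simp [hσ, PEquiv.toMatrix_apply, Equiv.eq_symm_apply, eq_comm]

lemma IsPermutationMatrix.transpose_mul_self {p : ℕ} {M : Matrix (Fin p) (Fin p) ℝ}
    (hM : IsPermutationMatrix M) : Mᵀ * M = 1 := by
  obtain ⟨σ, rfl⟩ := hM.exists_eq_permMatrix
  rw [transpose_permMatrix, ← permMatrix_mul, mul_inv_cancel, permMatrix_one]

lemma dotProduct_transpose_mul_mul_mulVec {n : Type*} [Fintype n] (C M : Matrix n n ℝ)
    (x : n → ℝ) : x ⬝ᵥ (Cᵀ * M * C) *ᵥ x = (C *ᵥ x) ⬝ᵥ M *ᵥ (C *ᵥ x) := by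
  rw [dotProduct_mulVec (C *ᵥ x), vecMul_mulVec, ← dotProduct_mulVec, mulVec_mulVec]

lemma exists_dotProduct_transpose_mul_diagonal_mul_eq {n : Type*} [Fintype n] [DecidableEq n]
    {C : Matrix n n ℝ} (hC : IsUnit C) (d : n → ℝ) (j : n) :
    ∃ x, C *ᵥ x = Pi.single j 1 ∧ x ⬝ᵥ (Cᵀ * diagonal d * C) *ᵥ x = d j := by
  obtain ⟨x, hx⟩ := mulVec_surjective_iff_isUnit.mpr hC (Pi.single j 1)
  refine ⟨x, hx, ?_⟩
  rw [dotProduct_transpose_mul_mul_mulVec, hx, mulVec_single_one]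
  simp

lemma le_half_mul_sq_of_le_div {τ c s r : ℝ} (hτ : 0 < τ) (hτc : τ ≤ c / (2 * s ^ 2))
    (hsr : 1 ≤ s * r) : τ ≤ c / 2 * r ^ 2 := by
  have hsr2 : 1 ≤ s ^ 2 * r ^ 2 := by nlinarith
  have hs2 : 0 < s ^ 2 := pos_of_mul_pos_left (by linarith) (sq_nonneg r)
  rw [le_div_iff₀ (by positivity)] at hτc
  nlinarith

theorem le_of_forall_half_mul_sq_le_dotProduct {p : ℕ} {C : Matrix (Fin p) (Fin p) ℝ}
    (hC : IsUnit C) {s : ℝ} (hCs : ∀ y, euclNorm (C *ᵥ y) ≤ s * euclNorm y)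
    {d : Fin p → ℝ} {c : ℝ}
    (hpos : ∀ x, c / 2 * euclNorm x ^ 2 ≤ x ⬝ᵥ (Cᵀ * diagonal d * C) *ᵥ x)
    {τ : ℝ} (hτ : 0 < τ) (hτc : τ ≤ c / (2 * s ^ 2)) (j : Fin p) : τ ≤ d j := by
  obtain ⟨x, hx, hxd⟩ := exists_dotProduct_transpose_mul_diagonal_mul_eq hC d j
  have hsx : 1 ≤ s * euclNorm x := by
    simpa [hx, euclNorm_single_one] using hCs x
  exact (le_half_mul_sq_of_le_div hτ hτc hsx).trans (hxd ▸ hpos x)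

theorem stmt_10_general {p : ℕ}
    (Pm L Q : Matrix (Fin p) (Fin p) ℝ)
    (hPm : IsPermutationMatrix Pm) (hL : IsUnit L) (hQ : Q * Qᵀ = 1)
    (lam : Fin p → ℝ)
    (σhi : ℝ)
    (hLup : ∀ x : Fin p → ℝ, euclNorm (Lᵀ *ᵥ x) ≤ σhi * euclNorm x)
    (lamstar : ℝ)
    (hpos : ∀ x : Fin p → ℝ,
      lamstar / 2 * euclNorm x ^ 2 ≤
        x ⬝ᵥ (Pmᵀ * L * Q * Matrix.diagonal lam * Qᵀ * Lᵀ * Pm) *ᵥ x)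
    (τ : ℝ) (hτ : 0 < τ) (hττ : τ ≤ lamstar / (2 * σhi ^ 2)) :
    (∀ j, τ ≤ lam j) ∧
    Matrix.diagonal (fun j => max τ |lam j|) = Matrix.diagonal lam ∧
    Pmᵀ * L * Q * Matrix.diagonal (fun j => max τ |lam j|) * Qᵀ * Lᵀ * Pm =
      Pmᵀ * L * Q * Matrix.diagonal lam * Qᵀ * Lᵀ * Pm := by
  set C := Qᵀ * Lᵀ * Pm
  have hH : ∀ d, Pmᵀ * L * Q * diagonal d * Qᵀ * Lᵀ * Pm = Cᵀ * diagonal d * C := fun d => by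
    simp only [C, transpose_mul, transpose_transpose, Matrix.mul_assoc]
  have hPm' := hPm.transpose_mul_self
  have hQ' : Qᵀᵀ * Qᵀ = 1 := by rwa [transpose_transpose]
  have hC : IsUnit C :=
    ((IsUnit.of_mul_eq_one_right _ hQ').mul ((isUnit_transpose L).mpr hL)).mul
      (IsUnit.of_mul_eq_one_right _ hPm')
  have hCs : ∀ y, euclNorm (C *ᵥ y) ≤ σhi * euclNorm y := fun y => by
    rw [← mulVec_mulVec, ← mulVec_mulVec, euclNorm_mulVec_of_transpose_mul_self hQ',
      ← euclNorm_mulVec_of_transpose_mul_self hPm' y]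
    exact hLup _
  have hlam : ∀ j, τ ≤ lam j :=
    le_of_forall_half_mul_sq_le_dotProduct hC hCs (by simpa only [hH] using hpos) hτ hττ
  have hmax : (fun j => max τ |lam j|) = lam := funext fun j => by
    rw [abs_of_pos (hτ.trans_le (hlam j)), max_eq_right (hlam j)]
  exact ⟨hlam, by rw [hmax], by rw [hmax]⟩

/-- Preconditioning is vacuous for a sufficiently positive definite Hessian estimate:
if `H̄ = PᵀLQΛQᵀLᵀP` with `‖Lᵀx‖ ≤ σ̄‖x‖`, `xᵀH̄x ≥ (λ*/2)‖x‖²` and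
`0 < τ ≤ λ*/(2σ̄²)`, then every diagonal entry `λⱼ` of `Λ` satisfies `λⱼ ≥ τ`;
hence the modified diagonal `diag(max{τ,|λⱼ|})` equals `Λ` and `H̄` is unchanged. -/
theorem stmt_10 {p : ℕ} (hp : 1 ≤ p)
    (Pm L Q : Matrix (Fin p) (Fin p) ℝ)
    (hPm : IsPermutationMatrix Pm) (hL : IsUnit L) (hQ : Q * Qᵀ = 1)
    (lam : Fin p → ℝ)
    (σhi : ℝ) (hσhi : 0 < σhi)
    (hLup : ∀ x : Fin p → ℝ, euclNorm (Lᵀ *ᵥ x) ≤ σhi * euclNorm x)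
    (lamstar : ℝ) (hlamstar : 0 < lamstar)
    (hpos : ∀ x : Fin p → ℝ,
      lamstar / 2 * euclNorm x ^ 2 ≤
        x ⬝ᵥ (Pmᵀ * L * Q * Matrix.diagonal lam * Qᵀ * Lᵀ * Pm) *ᵥ x)
    (τ : ℝ) (hτ : 0 < τ) (hττ : τ ≤ lamstar / (2 * σhi ^ 2)) :
    (∀ j, τ ≤ lam j) ∧
    Matrix.diagonal (fun j => max τ |lam j|) = Matrix.diagonal lam ∧
    Pmᵀ * L * Q * Matrix.diagonal (fun j => max τ |lam j|) * Qᵀ * Lᵀ * Pm =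
      Pmᵀ * L * Q * Matrix.diagonal lam * Qᵀ * Lᵀ * Pm :=
  stmt_10_general Pm L Q hPm hL hQ lam σhi hLup lamstar hpos τ hτ hττ
end

section
/- Let (x_k)_{k∈ℕ} be a real sequence with 0 < x̲ ≤ x_k ≤ X < ∞ for all k (for some constants x̲, X), and let (z_k)_{k∈ℕ} satisfy 0 ≤ z_k ≤ z̄ for all k, where z̄ < 1. For j ≤ k define ν_{j,k} := (1 − z_j)·∏_{i=j+1}^{k} z_i. Then limsup_{k→∞} ∑_{j=1}^{k} ν_{j,k}·x_j ≤ limsup_{k→∞} x_k. -/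
/-!
The weights `ν_{j,k}` are nonnegative, sum to `1 - ∏ z ≤ 1`, and for fixed `j` decay like
`z̄ ^ (k - j)`. Any such sub-stochastic family of weights, each of which tends to `0`, averages a
nonnegative bounded sequence to something asymptotically at most its limsup: past an index `N`
beyond which `x < limsup x + ε`, the tail contributes at most `limsup x + ε` (the missing mass
is harmless because `limsup x ≥ 0`), while the finitely many head terms vanish as `k → ∞`.
-/

open Finset Filter Topology

theorem limsup_weighted_sum_le_limsup (x : ℕ → ℝ) (w : ℕ → ℕ → ℝ) (s : ℕ → Finset ℕ)
    (hx : ∀ j, 0 ≤ x j) (hx_bdd : IsBoundedUnder (· ≤ ·) atTop x)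
    (hw : ∀ j k, 0 ≤ w j k) (hw_sum : ∀ k, ∑ j ∈ s k, w j k ≤ 1)
    (hw_lim : ∀ j, Tendsto (fun k => w j k) atTop (𝓝 0)) :
    limsup (fun k => ∑ j ∈ s k, w j k * x j) atTop ≤ limsup x atTop := by
  set L := limsup x atTop
  have hL : 0 ≤ L := le_limsup_of_frequently_le (Frequently.of_forall hx) hx_bdd
  refine le_of_forall_pos_le_add fun ε hε => ?_
  obtain ⟨N, hN⟩ := eventually_atTop.mp
    (eventually_lt_of_limsup_lt (lt_add_of_pos_right L (half_pos hε)) hx_bdd)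
  have head_lim : Tendsto (fun k => ∑ j ∈ range N, w j k * x j) atTop (𝓝 0) := by
    simpa using tendsto_finsetSum (range N) fun j _ => (hw_lim j).mul_const (x j)
  refine limsup_le_of_le (isCoboundedUnder_le_of_le atTop fun k =>
    sum_nonneg fun j _ => mul_nonneg (hw j k) (hx j)) ?_
  filter_upwards [head_lim.eventually (eventually_le_nhds (half_pos hε))] with k hk
  have head_le : ∑ j ∈ s k with j < N, w j k * x j ≤ ∑ j ∈ range N, w j k * x j :=
    sum_le_sum_of_subset_of_nonneg (fun j hj => mem_range.mpr (mem_filter.mp hj).2)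
      fun j _ _ => mul_nonneg (hw j k) (hx j)
  have tail_le : ∑ j ∈ s k with ¬j < N, w j k * x j ≤ L + ε / 2 :=
    calc ∑ j ∈ s k with ¬j < N, w j k * x j
        ≤ ∑ j ∈ s k with ¬j < N, w j k * (L + ε / 2) :=
          sum_le_sum fun j hj => mul_le_mul_of_nonneg_left
            (hN j (not_lt.mp (mem_filter.mp hj).2)).le (hw j k)
      _ ≤ ∑ j ∈ s k, w j k * (L + ε / 2) :=
          sum_le_sum_of_subset_of_nonneg (filter_subset _ _)
            fun j _ _ => mul_nonneg (hw j k) (by positivity)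
      _ = (∑ j ∈ s k, w j k) * (L + ε / 2) := (sum_mul _ _ _).symm
      _ ≤ L + ε / 2 := mul_le_of_le_one_left (by positivity) (hw_sum k)
  rw [← sum_filter_add_sum_filter_not (s k) (· < N)]
  linarith

def telescopingWeight {R : Type*} [CommRing R] (z : ℕ → R) (j k : ℕ) : R :=
  (1 - z j) * ∏ i ∈ Icc (j + 1) k, z i

section CommRing

variable {R : Type*} [CommRing R] (z : ℕ → R)

theorem telescopingWeight_self (k : ℕ) : telescopingWeight z k k = 1 - z k := by
  simp [telescopingWeight]

theorem telescopingWeight_succ {j k : ℕ} (hjk : j ≤ k) :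
    telescopingWeight z j (k + 1) = telescopingWeight z j k * z (k + 1) := by
  rw [telescopingWeight, telescopingWeight, prod_Icc_succ_top (by omega), mul_assoc]

theorem sum_telescopingWeight (k : ℕ) :
    ∑ j ∈ Icc 1 k, telescopingWeight z j k = 1 - ∏ j ∈ Icc 1 k, z j := by
  induction k with
  | zero => simp
  | succ k ih =>
    have sum_succ : ∑ j ∈ Icc 1 k, telescopingWeight z j (k + 1)
        = (∑ j ∈ Icc 1 k, telescopingWeight z j k) * z (k + 1) := by
      rw [sum_mul]
      exact sum_congr rfl fun j hj => telescopingWeight_succ z (mem_Icc.mp hj).2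
    rw [← insert_Icc_right_eq_Icc_add_one (by omega), sum_insert (by simp),
      telescopingWeight_self, sum_succ, ih, insert_Icc_right_eq_Icc_add_one (by omega),
      prod_Icc_succ_top (by omega)]
    ring

end CommRing

section Real

variable {z : ℕ → ℝ}

theorem telescopingWeight_nonneg (hz : ∀ k, 0 ≤ z k ∧ z k ≤ 1) (j k : ℕ) :
    0 ≤ telescopingWeight z j k :=
  mul_nonneg (sub_nonneg.mpr (hz j).2) (prod_nonneg fun i _ => (hz i).1)

theorem sum_telescopingWeight_le_one (hz : ∀ k, 0 ≤ z k) (k : ℕ) :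
    ∑ j ∈ Icc 1 k, telescopingWeight z j k ≤ 1 := by
  rw [sum_telescopingWeight]
  exact sub_le_self 1 (prod_nonneg fun i _ => hz i)

theorem telescopingWeight_le_pow {zbar : ℝ} (hz : ∀ k, 0 ≤ z k ∧ z k ≤ zbar) (j k : ℕ) :
    telescopingWeight z j k ≤ zbar ^ (k - j) := by
  have prod_le : ∏ i ∈ Icc (j + 1) k, z i ≤ zbar ^ (k - j) :=
    calc ∏ i ∈ Icc (j + 1) k, z i ≤ ∏ _i ∈ Icc (j + 1) k, zbar :=
          prod_le_prod (fun i _ => (hz i).1) fun i _ => (hz i).2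
      _ = zbar ^ (k - j) := by rw [prod_const, Nat.card_Icc, Nat.add_sub_add_right]
  exact (mul_le_of_le_one_left (prod_nonneg fun i _ => (hz i).1) (sub_le_self 1 (hz j).1)).trans
    prod_le

theorem tendsto_telescopingWeight {zbar : ℝ} (hzbar : zbar < 1)
    (hz : ∀ k, 0 ≤ z k ∧ z k ≤ zbar) (j : ℕ) :
    Tendsto (fun k => telescopingWeight z j k) atTop (𝓝 0) := by
  have hzbar_nonneg : 0 ≤ zbar := (hz 0).1.trans (hz 0).2
  have hz_le_one : ∀ k, 0 ≤ z k ∧ z k ≤ 1 := fun k => ⟨(hz k).1, (hz k).2.trans hzbar.le⟩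
  exact squeeze_zero (telescopingWeight_nonneg hz_le_one j) (telescopingWeight_le_pow hz j)
    ((tendsto_pow_atTop_nhds_zero_of_lt_one hzbar_nonneg hzbar).comp (tendsto_sub_atTop_nat j))

end Real

/-- Weighted-average limsup lemma: if `0 < x̲ ≤ x k ≤ X` and `0 ≤ z k ≤ z̄ < 1`,
and `ν_{j,k} = (1 - z j) ∏_{i=j+1}^{k} z i`, then
`limsup_k ∑_{j=1}^{k} ν_{j,k} x j ≤ limsup_k x k`. -/
theorem stmt_14 (x z : ℕ → ℝ) (xlo X : ℝ) (hxlo : 0 < xlo)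
    (hxbound : ∀ k, xlo ≤ x k ∧ x k ≤ X)
    (zbar : ℝ) (hzbar : zbar < 1) (hz : ∀ k, 0 ≤ z k ∧ z k ≤ zbar) :
    Filter.limsup
        (fun k => ∑ j ∈ Finset.Icc 1 k,
          ((1 - z j) * ∏ i ∈ Finset.Icc (j + 1) k, z i) * x j)
        Filter.atTop ≤
      Filter.limsup x Filter.atTop :=
  limsup_weighted_sum_le_limsup x (telescopingWeight z) (fun k => Icc 1 k)
    (fun j => hxlo.le.trans (hxbound j).1) (isBoundedUnder_of ⟨X, fun k => (hxbound k).2⟩)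
    (telescopingWeight_nonneg fun k => ⟨(hz k).1, (hz k).2.trans hzbar.le⟩)
    (sum_telescopingWeight_le_one fun k => (hz k).1) (tendsto_telescopingWeight hzbar hz)
end

section
/- Let 𝒞, ℒ be reals with ℒ ≥ 𝒞 > 0 and R := ℒ/𝒞. (i) If 1 ≤ R ≤ (1 + √5)/2, then 𝒞⁴(q + 2)² − 4𝒞²ℒ(ℒ − 𝒞)(q + 1) > 0 for every q > 0. (ii) If R > (1 + √5)/2, then 𝒞⁴(q + 2)² − 4𝒞²ℒ(ℒ − 𝒞)(q + 1) > 0 for every q > 2(R² − R − 1) + 2√(R(R − 1)(R² − R − 1)). -/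
/-!
Writing `ℒ = R𝒞`, the discriminant equals `𝒞⁴ ((q + 2)² − 4k(q + 1))` with `k = R(R − 1)`.
Since `(q + 2)² − 4k(q + 1) = q² − 4(k − 1)(q + 1)`, it is at least `q² > 0` when `k ≤ 1`,
which is the case `R ≤ φ` because `φ² − φ = 1`. When `k > 1` it equals
`(q − 2(k − 1))² − 4k(k − 1)`, positive to the right of its larger root `2(k − 1) + 2√(k(k − 1))`;
for `k = R(R − 1)` this root is the threshold of (ii).
-/

open Real goldenRatio

lemma mul_sub_one_le_one_of_le_goldenRatio {R : ℝ} (hR : 0 ≤ R) (hRφ : R ≤ φ) :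
    R * (R - 1) ≤ 1 := by
  have hsum : 0 ≤ R + φ - 1 := by linarith [one_lt_goldenRatio]
  nlinarith [goldenRatio_sq, mul_nonneg (sub_nonneg.2 hRφ) hsum]

lemma one_lt_mul_sub_one_of_goldenRatio_lt {R : ℝ} (hRφ : φ < R) : 1 < R * (R - 1) := by
  nlinarith [goldenRatio_sq, one_lt_goldenRatio]

lemma sq_add_two_sub_mul_pos_of_le_one {k q : ℝ} (hk : k ≤ 1) (hq : 0 < q) :
    0 < (q + 2) ^ 2 - 4 * k * (q + 1) := by
  nlinarith

lemma sq_add_two_sub_mul_pos_of_root_lt {k q : ℝ} (hk : 1 ≤ k)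
    (hq : 2 * (k - 1) + 2 * √(k * (k - 1)) < q) :
    0 < (q + 2) ^ 2 - 4 * k * (q + 1) := by
  set t := √(k * (k - 1))
  have ht_sq : t ^ 2 = k * (k - 1) := sq_sqrt (by nlinarith)
  have ht : 0 ≤ t := sqrt_nonneg _
  have hfactor : (q + 2) ^ 2 - 4 * k * (q + 1)
      = (q - 2 * (k - 1) - 2 * t) * (q - 2 * (k - 1) + 2 * t) := by
    linear_combination 4 * ht_sq
  rw [hfactor]
  exact mul_pos (by linarith) (by linarith)

theorem stmt_16_general (C L : ℝ) (hC : 0 < C)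
    (R : ℝ) (hR : R = L / C) :
    ((1 ≤ R ∧ R ≤ (1 + Real.sqrt 5) / 2) →
      ∀ q : ℝ, 0 < q →
        0 < C ^ 4 * (q + 2) ^ 2 - 4 * C ^ 2 * L * (L - C) * (q + 1)) ∧
    ((1 + Real.sqrt 5) / 2 < R →
      ∀ q : ℝ,
        2 * (R ^ 2 - R - 1) + 2 * Real.sqrt (R * (R - 1) * (R ^ 2 - R - 1)) < q →
        0 < C ^ 4 * (q + 2) ^ 2 - 4 * C ^ 2 * L * (L - C) * (q + 1)) := by
  obtain rfl : L = R * C := by rw [hR, div_mul_cancel₀ L hC.ne']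
  have hdisc (q : ℝ) : C ^ 4 * (q + 2) ^ 2 - 4 * C ^ 2 * (R * C) * (R * C - C) * (q + 1)
      = C ^ 4 * ((q + 2) ^ 2 - 4 * (R * (R - 1)) * (q + 1)) := by ring
  refine ⟨fun ⟨hR1, hRφ⟩ q hq => ?_, fun hRφ q hq => ?_⟩
  · rw [hdisc]
    exact mul_pos (by positivity) <| sq_add_two_sub_mul_pos_of_le_one
      (mul_sub_one_le_one_of_le_goldenRatio (by linarith) hRφ) hq
  · rw [hdisc]
    refine mul_pos (by positivity) <|
      sq_add_two_sub_mul_pos_of_root_lt (one_lt_mul_sub_one_of_goldenRatio_lt hRφ).le ?_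
    convert hq using 4 <;> ring

/-- Let `ℒ ≥ 𝒞 > 0` with ratio `R = ℒ/𝒞`.
(i) If `1 ≤ R ≤ (1+√5)/2`, then `𝒞⁴(q+2)² − 4𝒞²ℒ(ℒ−𝒞)(q+1) > 0` for all `q > 0`.
(ii) If `R > (1+√5)/2`, the same holds for all `q > 2(R²−R−1) + 2√(R(R−1)(R²−R−1))`. -/
theorem stmt_16 (C L : ℝ) (hC : 0 < C) (hCL : C ≤ L)
    (R : ℝ) (hR : R = L / C) :
    ((1 ≤ R ∧ R ≤ (1 + Real.sqrt 5) / 2) →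
      ∀ q : ℝ, 0 < q →
        0 < C ^ 4 * (q + 2) ^ 2 - 4 * C ^ 2 * L * (L - C) * (q + 1)) ∧
    ((1 + Real.sqrt 5) / 2 < R →
      ∀ q : ℝ,
        2 * (R ^ 2 - R - 1) + 2 * Real.sqrt (R * (R - 1) * (R ^ 2 - R - 1)) < q →
        0 < C ^ 4 * (q + 2) ^ 2 - 4 * C ^ 2 * L * (L - C) * (q + 1)) :=
  stmt_16_general C L hC R hR
end

section
/- Let 𝒞, ℒ be reals with ℒ ≥ 𝒞 > 0 and R := ℒ/𝒞. Define q₁(R) := 2(R² − 1) + 2R√(R² − 1), q₂(R) := 2(R² − R − 1) + 2√(R(R − 1)(R² − R − 1)), and for q > 0, μ_±(q) := [q + 2 ± √(q² + 4(1 + R − R²)q + 4(1 + R − R²))]/(2(q + 1)). Suppose the slack q > 0 and the gain a > 0 are chosen as follows: (i) if R = 1, then q > 0 is arbitrary and 1 ≤ aℒ < 1 + 1/(q + 1); (ii) if 1 < R < (1 + √5)/2, then 0 < q ≤ q₁(R) and 1/(q + 1) ≤ aℒ < μ₊(q); (iii) if R ≥ (1 + √5)/2, then q₂(R) < q ≤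 q₁(R) and μ₋(q) < aℒ < μ₊(q). Then u := ℒ/𝒞 + a𝒞[(q + 1)(aℒ − 1) − 1] satisfies 0 ≤ u < 1, and v := a[aℒ(q + 1) − 1]/(q𝒞) satisfies v ≥ 0. -/
/-- Upper limit `q₁(R) = 2(R²−1) + 2R√(R²−1)` for the slack variable. -/
noncomputable def q1 (R : ℝ) : ℝ := 2 * (R ^ 2 - 1) + 2 * R * Real.sqrt (R ^ 2 - 1)

/-- Lower limit `q₂(R) = 2(R²−R−1) + 2√(R(R−1)(R²−R−1))` for the slack variable. -/
noncomputable def q2 (R : ℝ) : ℝ :=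
  2 * (R ^ 2 - R - 1) + 2 * Real.sqrt (R * (R - 1) * (R ^ 2 - R - 1))

/-- `μ₊(q) = (q + 2 + √(q² + 4(1+R−R²)q + 4(1+R−R²)))/(2(q+1))`. -/
noncomputable def muPlus (R q : ℝ) : ℝ :=
  (q + 2 + Real.sqrt (q ^ 2 + 4 * (1 + R - R ^ 2) * q + 4 * (1 + R - R ^ 2))) /
    (2 * (q + 1))

/-- `μ₋(q) = (q + 2 − √(q² + 4(1+R−R²)q + 4(1+R−R²)))/(2(q+1))`. -/
noncomputable def muMinus (R q : ℝ) : ℝ :=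
  (q + 2 - Real.sqrt (q ^ 2 + 4 * (1 + R - R ^ 2) * q + 4 * (1 + R - R ^ 2))) /
    (2 * (q + 1))

/-!
With `x = aℒ`, `R·u = (q + 1)x² - (q + 2)x + R²` and the sign of `v` is that of `(q + 1)x - 1`.
The quadratic is nonnegative for every `x` as soon as its discriminant `q² - 4(R² - 1)(q + 1)`
is `≤ 0`, which is exactly `q ≤ q₁(R)`; and `R·u < R` says that `x` lies strictly between the
roots `μ₋(q) < μ₊(q)` of the quadratic minus `R`. Whether `μ₋(q)` lies below or above
`1/(q + 1)` is decided by the sign of `R² - R - 1`, i.e. by the position of `R` relative to the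
golden ratio, which is why the lower bound on `aℒ` changes between cases (ii) and (iii).
-/

open Real goldenRatio

lemma sq_sub_self_sub_one_eq_mul (x : ℝ) : x ^ 2 - x - 1 = (x - φ) * (x - ψ) := by
  linear_combination x * goldenRatio_add_goldenConj - goldenRatio_mul_goldenConj

lemma sq_sub_self_sub_one_neg {x : ℝ} (h0 : 0 ≤ x) (h : x < φ) : x ^ 2 - x - 1 < 0 := by
  rw [sq_sub_self_sub_one_eq_mul]
  exact mul_neg_of_neg_of_pos (by linarith) (by linarith [goldenConj_neg])

lemma sq_sub_self_sub_one_nonneg {x : ℝ} (h : φ ≤ x) : 0 ≤ x ^ 2 - x - 1 := by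
  rw [sq_sub_self_sub_one_eq_mul]
  exact mul_nonneg (by linarith) (by linarith [goldenConj_neg, goldenRatio_pos])

def gainQuad (q x : ℝ) : ℝ := (q + 1) * x ^ 2 - (q + 2) * x

lemma four_mul_gainQuad (q x : ℝ) :
    4 * (q + 1) * gainQuad q x = (2 * (q + 1) * x - (q + 2)) ^ 2 - (q + 2) ^ 2 := by
  unfold gainQuad; ring

/-- `q₁(R)` is the larger root of `q² - 4(R² - 1)(q + 1)`; the smaller one is `≤ 0`. -/
lemma sq_le_of_le_q1 {R q : ℝ} (hR : 1 ≤ R) (hq : 0 ≤ q) (h : q ≤ q1 R) :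
    q ^ 2 ≤ 4 * (R ^ 2 - 1) * (q + 1) := by
  have hw : √(R ^ 2 - 1) ^ 2 = R ^ 2 - 1 := sq_sqrt (by nlinarith)
  have hw0 : 0 ≤ √(R ^ 2 - 1) := sqrt_nonneg _
  have hwR : √(R ^ 2 - 1) ≤ R := by nlinarith
  have hlow : 2 * (R ^ 2 - 1) - 2 * R * √(R ^ 2 - 1) ≤ q := by nlinarith
  unfold q1 at h
  nlinarith [mul_nonneg (sub_nonneg.2 h) (sub_nonneg.2 hlow)]

lemma gainQuad_add_sq_nonneg {R q : ℝ} (hR : 1 ≤ R) (hq : 0 ≤ q) (h : q ≤ q1 R) (x : ℝ) :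
    0 ≤ gainQuad q x + R ^ 2 := by
  have := four_mul_gainQuad q x
  nlinarith [sq_le_of_le_q1 hR hq h, sq_nonneg (2 * (q + 1) * x - (q + 2))]

/-- `μ₋(q)` and `μ₊(q)` are the roots of `gainQuad q x + R² - R`, whose discriminant is the
radicand `D`; if `D < 0` the square root is `0` and the interval `(μ₋, μ₊)` is empty. -/
lemma gainQuad_add_sq_lt {R q x : ℝ} (hq : -1 < q) (h₁ : muMinus R q < x) (h₂ : x < muPlus R q) :
    gainQuad q x + R ^ 2 < R := by
  set D := q ^ 2 + 4 * (1 + R - R ^ 2) * q + 4 * (1 + R - R ^ 2) with hD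
  have hq1 : 0 < 2 * (q + 1) := by linarith
  unfold muMinus at h₁
  unfold muPlus at h₂
  rw [← hD, div_lt_iff₀ hq1] at h₁
  rw [← hD, lt_div_iff₀ hq1] at h₂
  have hD0 : 0 ≤ D := by
    by_contra! hneg
    rw [sqrt_eq_zero_of_nonpos hneg.le] at h₁ h₂
    linarith
  have hsq : (2 * (q + 1) * x - (q + 2)) ^ 2 < D := by
    rw [← sq_sqrt hD0]
    exact sq_lt_sq' (by linarith) (by linarith)
  have := four_mul_gainQuad q x
  nlinarith

lemma muPlus_one {q : ℝ} (hq : -1 < q) : muPlus 1 q = 1 + 1 / (q + 1) := by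
  have hq1 : q + 1 ≠ 0 := by linarith
  rw [muPlus, show q ^ 2 + 4 * (1 + 1 - 1 ^ 2) * q + 4 * (1 + 1 - 1 ^ 2) = (q + 2) ^ 2 by ring,
    sqrt_sq (by linarith)]
  field_simp
  ring

lemma muMinus_one {q : ℝ} (hq : -2 ≤ q) : muMinus 1 q = 0 := by
  rw [muMinus, show q ^ 2 + 4 * (1 + 1 - 1 ^ 2) * q + 4 * (1 + 1 - 1 ^ 2) = (q + 2) ^ 2 by ring,
    sqrt_sq (by linarith)]
  simp

lemma muMinus_lt_inv {R q : ℝ} (hq : 0 ≤ q) (hR : R ^ 2 - R - 1 < 0) :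
    muMinus R q < 1 / (q + 1) := by
  have hlt : q < √(q ^ 2 + 4 * (1 + R - R ^ 2) * q + 4 * (1 + R - R ^ 2)) :=
    lt_sqrt_of_sq_lt (by nlinarith)
  rw [muMinus, show 1 / (q + 1) = 2 / (2 * (q + 1)) by field_simp]
  gcongr
  linarith

lemma inv_le_muMinus {R q : ℝ} (hq : 0 ≤ q) (hR : 0 ≤ R ^ 2 - R - 1) :
    1 / (q + 1) ≤ muMinus R q := by
  have hle : √(q ^ 2 + 4 * (1 + R - R ^ 2) * q + 4 * (1 + R - R ^ 2)) ≤ q :=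
    sqrt_le_iff.2 ⟨hq, by nlinarith⟩
  rw [muMinus, show 1 / (q + 1) = 2 / (2 * (q + 1)) by field_simp]
  gcongr
  linarith

lemma contraction_coeff_eq {C L : ℝ} (hC : C ≠ 0) (hL : L ≠ 0) (q a : ℝ) :
    L / C + a * C * ((q + 1) * (a * L - 1) - 1) = (gainQuad q (a * L) + (L / C) ^ 2) / (L / C) := by
  unfold gainQuad
  field_simp
  ring

lemma gainQuad_bounds_of_selection {R q x : ℝ} (hq : 0 < q)
    (hcase :
      (R = 1 ∧ 1 ≤ x ∧ x < 1 + 1 / (q + 1)) ∨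
      (1 < R ∧ R < (1 + √5) / 2 ∧ q ≤ q1 R ∧ 1 / (q + 1) ≤ x ∧ x < muPlus R q) ∨
      ((1 + √5) / 2 ≤ R ∧ q2 R < q ∧ q ≤ q1 R ∧ muMinus R q < x ∧ x < muPlus R q)) :
    0 ≤ gainQuad q x + R ^ 2 ∧ gainQuad q x + R ^ 2 < R ∧ 1 ≤ (q + 1) * x := by
  rcases hcase with ⟨rfl, h₁, h₂⟩ | ⟨hR₁, hRφ, hq₁, h₁, h₂⟩ | ⟨hφR, -, hq₁, h₁, h₂⟩
  · have hfactor : gainQuad q x + 1 ^ 2 = ((q + 1) * x - 1) * (x - 1) := by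
      unfold gainQuad; ring
    refine ⟨hfactor ▸ mul_nonneg (by nlinarith) (by linarith), ?_, by nlinarith⟩
    exact gainQuad_add_sq_lt (by linarith) (by rw [muMinus_one (by linarith)]; linarith)
      (by rwa [muPlus_one (by linarith)])
  · have hx : muMinus R q < x :=
      (muMinus_lt_inv hq.le (sq_sub_self_sub_one_neg (by linarith) hRφ)).trans_le h₁
    refine ⟨gainQuad_add_sq_nonneg hR₁.le hq.le hq₁ x, gainQuad_add_sq_lt (by linarith) hx h₂, ?_⟩
    rwa [div_le_iff₀ (by linarith), mul_comm] at h₁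
  · have hR₁ : 1 ≤ R := one_lt_goldenRatio.le.trans hφR
    have hx : 1 / (q + 1) < x :=
      (inv_le_muMinus hq.le (sq_sub_self_sub_one_nonneg hφR)).trans_lt h₁
    refine ⟨gainQuad_add_sq_nonneg hR₁ hq.le hq₁ x, gainQuad_add_sq_lt (by linarith) h₁ h₂, ?_⟩
    rw [div_lt_iff₀ (by linarith), mul_comm] at hx
    exact hx.le

theorem stmt_17_general (C L : ℝ) (hC : 0 < C)
    (R : ℝ) (hR : R = L / C) (q a : ℝ) (hq : 0 < q) (ha : 0 < a)
    (hcase :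
      (R = 1 ∧ 1 ≤ a * L ∧ a * L < 1 + 1 / (q + 1)) ∨
      (1 < R ∧ R < (1 + Real.sqrt 5) / 2 ∧ q ≤ q1 R ∧
        1 / (q + 1) ≤ a * L ∧ a * L < muPlus R q) ∨
      ((1 + Real.sqrt 5) / 2 ≤ R ∧ q2 R < q ∧ q ≤ q1 R ∧
        muMinus R q < a * L ∧ a * L < muPlus R q)) :
    (0 ≤ L / C + a * C * ((q + 1) * (a * L - 1) - 1) ∧
      L / C + a * C * ((q + 1) * (a * L - 1) - 1) < 1) ∧
    0 ≤ a * (a * L * (q + 1) - 1) / (q * C) := by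
  obtain ⟨hu₀, hu₁, hv⟩ := gainQuad_bounds_of_selection hq hcase
  have hR₀ : 0 < R := by linarith
  have hL : L ≠ 0 := by
    rintro rfl
    simp [hR] at hR₀
  subst hR
  rw [contraction_coeff_eq hC.ne' hL]
  exact ⟨⟨div_nonneg hu₀ hR₀.le, (div_lt_one hR₀).2 hu₁⟩,
    div_nonneg (mul_nonneg ha.le (by linarith)) (by positivity)⟩

/-- Slack-variable and gain selection: under the stated case analysis on `R = ℒ/𝒞`,
the coefficient `u = ℒ/𝒞 + a𝒞[(q+1)(aℒ−1)−1]` satisfies `0 ≤ u < 1`, and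
`v = a[aℒ(q+1)−1]/(q𝒞)` satisfies `v ≥ 0`. -/
theorem stmt_17 (C L : ℝ) (hC : 0 < C) (hCL : C ≤ L)
    (R : ℝ) (hR : R = L / C) (q a : ℝ) (hq : 0 < q) (ha : 0 < a)
    (hcase :
      (R = 1 ∧ 1 ≤ a * L ∧ a * L < 1 + 1 / (q + 1)) ∨
      (1 < R ∧ R < (1 + Real.sqrt 5) / 2 ∧ q ≤ q1 R ∧
        1 / (q + 1) ≤ a * L ∧ a * L < muPlus R q) ∨
      ((1 + Real.sqrt 5) / 2 ≤ R ∧ q2 R < q ∧ q ≤ q1 R ∧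
        muMinus R q < a * L ∧ a * L < muPlus R q)) :
    (0 ≤ L / C + a * C * ((q + 1) * (a * L - 1) - 1) ∧
      L / C + a * C * ((q + 1) * (a * L - 1) - 1) < 1) ∧
    0 ≤ a * (a * L * (q + 1) - 1) / (q * C) :=
  stmt_17_general C L hC R hR q a hq ha hcase
end
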